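/- If R ≅ Z₂ × Z₄ or R ≅ Z₂ × Z₂[X]/(X²), then γ_t(Γ(R)) = γ(Γ(R)) = 2. -/

import Mathlib

/-- Vertices of the zero-divisor graph: nonzero zero-divisors. -/
def zdVerts (R : Type*) [CommRing R] : Set R :=
  {x | x ≠ 0 ∧ ∃ y ≠ 0, x * y = 0}

/-- The set of all zero-divisors (including 0 when R is nontrivial). -/
def zdSet (R : Type*) [CommRing R] : Set R :=
  {x | ∃ y ≠ 0, x * y = 0}

/-- A dominating set of the zero-divisor graph Γ(R) (loops allowed: `x` is
adjacent to itself iff `x^2 = 0`). -/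
def IsDomSet (R : Type*) [CommRing R] (X : Set R) : Prop :=
  X ⊆ zdVerts R ∧ ∀ v ∈ zdVerts R, v ∉ X → ∃ x ∈ X, x * v = 0

/-- A total dominating set of Γ(R): every vertex has a neighbor in `X`
(possibly itself, if looped). -/
def IsTotDomSet (R : Type*) [CommRing R] (X : Set R) : Prop :=
  X ⊆ zdVerts R ∧ ∀ v ∈ zdVerts R, ∃ x ∈ X, x * v = 0

/-- The domination number γ(Γ(R)), as a cardinal. -/
noncomputable def domNum (R : Type*) [CommRing R] : Cardinal :=
  ⨅ X : {X : Set R // IsDomSet R X}, Cardinal.mk X.1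

/-- The total domination number γ_t(Γ(R)), as a cardinal. -/
noncomputable def totDomNum (R : Type*) [CommRing R] : Cardinal :=
  ⨅ X : {X : Set R // IsTotDomSet R X}, Cardinal.mk X.1

/-- The zero-divisor graph as a simple graph (loops discarded), used for girth. -/
def zdGraph (R : Type*) [CommRing R] : SimpleGraph R where
  Adj r s := r ≠ s ∧ r ≠ 0 ∧ s ≠ 0 ∧ r * s = 0
  symm := by constructor; intro r s h; exact ⟨h.1.symm, h.2.2.1, h.2.1, by rw [mul_comm]; exact h.2.2.2⟩
  loopless := by constructor; intro r h; exact h.1 rfl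

/-!
Both rings are `ZMod 2 × S` for a ring `S` with an element `ε ≠ 0` such that `ε² = 0` and `ε`
kills every zero-divisor of `S`: take `ε = 2` in `ℤ/4`, and `ε = X` in `𝔽₂[X]/(X²)`, where
`X² ∣ a b` with `X² ∤ b` forces `X ∣ a` because `X` is prime. The pair `{(1, 0), (0, ε)}` is
then a total dominating set: `(1, 0)` kills every vertex `(0, s)`, and a vertex `(1, s)` has `s`
a zero-divisor of `S`, so `(0, ε)` kills it. No single vertex dominates, because every vertex `x`
has another vertex `v` with `x v ≠ 0`. Hence `2 ≤ γ ≤ γ_t ≤ 2`, and both numbers are invariant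
under ring isomorphisms.
-/

open Cardinal

universe u v

section Domination

variable {R : Type u} [CommRing R]

theorem isDomSet_zdVerts : IsDomSet R (zdVerts R) :=
  ⟨subset_rfl, fun _ hv hnv => absurd hv hnv⟩

theorem isTotDomSet_zdVerts : IsTotDomSet R (zdVerts R) := by
  refine ⟨subset_rfl, fun v ⟨hv, y, hy, hvy⟩ => ⟨y, ⟨hy, v, hv, ?_⟩, ?_⟩⟩ <;> rwa [mul_comm]

instance : Nonempty {X : Set R // IsDomSet R X} := ⟨⟨_, isDomSet_zdVerts⟩⟩

instance : Nonempty {X : Set R // IsTotDomSet R X} := ⟨⟨_, isTotDomSet_zdVerts⟩⟩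

theorem IsTotDomSet.isDomSet {X : Set R} (h : IsTotDomSet R X) : IsDomSet R X :=
  ⟨h.1, fun v hv _ => h.2 v hv⟩

theorem domNum_le_totDomNum : domNum R ≤ totDomNum R :=
  le_ciInf fun X => ciInf_le' (fun Y : {X : Set R // IsDomSet R X} => #Y.1) ⟨X.1, X.2.isDomSet⟩

theorem totDomNum_le_mk {X : Set R} (h : IsTotDomSet R X) : totDomNum R ≤ #X :=
  ciInf_le' (fun Y : {X : Set R // IsTotDomSet R X} => #Y.1) ⟨X, h⟩

theorem le_domNum {c : Cardinal} (h : ∀ X, IsDomSet R X → c ≤ #X) : c ≤ domNum R :=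
  le_ciInf fun X => h X.1 X.2

theorem two_le_mk_of_isDomSet (hne : (zdVerts R).Nonempty)
    (hundom : ∀ x ∈ zdVerts R, ∃ v ∈ zdVerts R, v ≠ x ∧ x * v ≠ 0) {X : Set R}
    (hX : IsDomSet R X) : 2 ≤ #X := by
  obtain ⟨x, hx⟩ : X.Nonempty := by
    obtain ⟨w, hw⟩ := hne
    by_cases hwX : w ∈ X
    · exact ⟨w, hwX⟩
    · obtain ⟨x, hx, -⟩ := hX.2 w hw hwX
      exact ⟨x, hx⟩
  obtain ⟨v, hv, hvx, hxv⟩ := hundom x (hX.1 hx)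
  rw [two_le_iff]
  by_cases hvX : v ∈ X
  · exact ⟨⟨x, hx⟩, ⟨v, hvX⟩, fun h => hvx (congrArg Subtype.val h).symm⟩
  · obtain ⟨y, hy, hyv⟩ := hX.2 v hv hvX
    exact ⟨⟨x, hx⟩, ⟨y, hy⟩, fun h => hxv (by rwa [show x = y from congrArg Subtype.val h])⟩

end Domination

theorem lift_iInf_mk_le_of_preimage {α : Type u} {β : Type v} {P : Set α → Prop}
    {P' : Set β → Prop} [Nonempty {X : Set β // P' X}] (e : α ≃ β) (h : ∀ X, P' X → P (e ⁻¹' X)) :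
    lift.{v} (⨅ X : {X : Set α // P X}, #X.1) ≤ lift.{u} (⨅ X : {X : Set β // P' X}, #X.1) := by
  rw [lift_iInf (fun X : {X : Set β // P' X} => #X.1)]
  refine le_ciInf fun X : {X : Set β // P' X} => ?_
  calc lift.{v} (⨅ Y : {X : Set α // P X}, #Y.1) ≤ lift.{v} #(e ⁻¹' X.1) :=
        lift_le.2 (ciInf_le' (fun Y : {X : Set α // P X} => #Y.1) ⟨_, h X.1 X.2⟩)
    _ = lift.{u} #X.1 := mk_preimage_equiv_lift e X.1

section Invariance

variable {R : Type u} {R' : Type v} [CommRing R] [CommRing R']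

theorem RingEquiv.map_mem_zdVerts_iff (e : R ≃+* R') {x : R} :
    e x ∈ zdVerts R' ↔ x ∈ zdVerts R := by
  constructor
  · rintro ⟨hx, y, hy, hxy⟩
    exact ⟨by simpa using hx, e.symm y, by simpa using hy, e.injective (by simpa using hxy)⟩
  · rintro ⟨hx, y, hy, hxy⟩
    exact ⟨by simpa using hx, e y, by simpa using hy, by rw [← map_mul, hxy, map_zero]⟩

theorem IsDomSet.preimage (e : R ≃+* R') {X : Set R'} (h : IsDomSet R' X) :
    IsDomSet R (e ⁻¹' X) := by
  refine ⟨fun x hx => e.map_mem_zdVerts_iff.1 (h.1 hx), fun v hv hvX => ?_⟩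
  obtain ⟨x, hx, hxv⟩ := h.2 (e v) (e.map_mem_zdVerts_iff.2 hv) hvX
  exact ⟨e.symm x, by simpa using hx, e.injective (by simpa using hxv)⟩

theorem IsTotDomSet.preimage (e : R ≃+* R') {X : Set R'} (h : IsTotDomSet R' X) :
    IsTotDomSet R (e ⁻¹' X) := by
  refine ⟨fun x hx => e.map_mem_zdVerts_iff.1 (h.1 hx), fun v hv => ?_⟩
  obtain ⟨x, hx, hxv⟩ := h.2 (e v) (e.map_mem_zdVerts_iff.2 hv)
  exact ⟨e.symm x, by simpa using hx, e.injective (by simpa using hxv)⟩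

theorem RingEquiv.lift_domNum_eq (e : R ≃+* R') :
    lift.{v} (domNum R) = lift.{u} (domNum R') :=
  le_antisymm (lift_iInf_mk_le_of_preimage e.toEquiv fun _ => IsDomSet.preimage e)
    (lift_iInf_mk_le_of_preimage e.symm.toEquiv fun _ => IsDomSet.preimage e.symm)

theorem RingEquiv.lift_totDomNum_eq (e : R ≃+* R') :
    lift.{v} (totDomNum R) = lift.{u} (totDomNum R') :=
  le_antisymm (lift_iInf_mk_le_of_preimage e.toEquiv fun _ => IsTotDomSet.preimage e)
    (lift_iInf_mk_le_of_preimage e.symm.toEquiv fun _ => IsTotDomSet.preimage e.symm)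

end Invariance

section ZModTwoProd

theorem one_zero_mem_zdVerts_prod {A B : Type*} [CommRing A] [CommRing B] [Nontrivial A]
    [Nontrivial B] : ((1 : A), (0 : B)) ∈ zdVerts (A × B) :=
  ⟨by simp, (0, 1), by simp, by simp⟩

theorem zero_one_mem_zdVerts_prod {A B : Type*} [CommRing A] [CommRing B] [Nontrivial A]
    [Nontrivial B] : ((0 : A), (1 : B)) ∈ zdVerts (A × B) :=
  ⟨by simp, (1, 0), by simp, by simp⟩

variable {S : Type*} [CommRing S] {ε : S}

theorem zmod_two_eq_zero_or_eq_one : ∀ a : ZMod 2, a = 0 ∨ a = 1 := by decide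

theorem isTotDomSet_pair (hε : ε ≠ 0) (hε2 : ε * ε = 0) (hann : ∀ s ∈ zdSet S, ε * s = 0) :
    IsTotDomSet (ZMod 2 × S) {(1, 0), (0, ε)} := by
  have : Nontrivial S := nontrivial_of_ne ε 0 hε
  refine ⟨?_, fun v ⟨hv, y, hy, hvy⟩ => ?_⟩
  · rintro x (rfl | rfl)
    · exact one_zero_mem_zdVerts_prod
    · exact ⟨by simpa using hε, (0, ε), by simpa using hε, by simpa using hε2⟩
  rcases zmod_two_eq_zero_or_eq_one v.1 with h1 | h1
  · exact ⟨(1, 0), by simp, by simp [Prod.ext_iff, h1]⟩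
  · have hy1 : y.1 = 0 := by simpa [h1] using congrArg Prod.fst hvy
    have hy2 : y.2 ≠ 0 := fun h => hy (Prod.ext hy1 h)
    exact ⟨(0, ε), by simp, by simp [Prod.ext_iff, hann v.2 ⟨y.2, hy2, congrArg Prod.snd hvy⟩]⟩

theorem exists_mem_zdVerts_ne_mul_ne_zero (hε : ε ≠ 0) (hε2 : ε * ε = 0) :
    ∀ x ∈ zdVerts (ZMod 2 × S), ∃ v ∈ zdVerts (ZMod 2 × S), v ≠ x ∧ x * v ≠ 0 := by
  have : Nontrivial S := nontrivial_of_ne ε 0 hε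
  have h1ε : ((1 : ZMod 2), ε) ∈ zdVerts (ZMod 2 × S) :=
    ⟨by simp, (0, ε), by simpa using hε, by simpa using hε2⟩
  rintro ⟨x1, x2⟩ ⟨hx, -⟩
  rcases zmod_two_eq_zero_or_eq_one x1 with rfl | rfl
  · have hx2 : x2 ≠ 0 := by simpa using hx
    by_cases h : x2 = 1
    · exact ⟨_, h1ε, by simp, by simp [h, hε]⟩
    · exact ⟨_, zero_one_mem_zdVerts_prod, by simp [Ne.symm h], by simp [hx2]⟩
  · by_cases h : x2 = 0
    · exact ⟨_, h1ε, by simp [h, hε], by simp⟩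
    · exact ⟨_, one_zero_mem_zdVerts_prod, by simp [Ne.symm h], by simp⟩

theorem totDomNum_zmod_two_prod_le_two (hε : ε ≠ 0) (hε2 : ε * ε = 0)
    (hann : ∀ s ∈ zdSet S, ε * s = 0) : totDomNum (ZMod 2 × S) ≤ 2 := by
  refine (totDomNum_le_mk (isTotDomSet_pair hε hε2 hann)).trans_eq ?_
  rw [mk_insert (by simp), mk_singleton, one_add_one_eq_two]

theorem two_le_domNum_zmod_two_prod (hε : ε ≠ 0) (hε2 : ε * ε = 0) :
    2 ≤ domNum (ZMod 2 × S) :=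
  have : Nontrivial S := nontrivial_of_ne ε 0 hε
  le_domNum fun _ => two_le_mk_of_isDomSet ⟨_, one_zero_mem_zdVerts_prod⟩
    (exists_mem_zdVerts_ne_mul_ne_zero hε hε2)

end ZModTwoProd

theorem totDomNum_eq_two_and_domNum_eq_two_of_ringEquiv {R S : Type*} [CommRing R] [CommRing S]
    {ε : S} (hε : ε ≠ 0) (hε2 : ε * ε = 0) (hann : ∀ s ∈ zdSet S, ε * s = 0)
    (e : R ≃+* ZMod 2 × S) : totDomNum R = 2 ∧ domNum R = 2 := by
  have hle := totDomNum_zmod_two_prod_le_two hε hε2 hann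
  have hge := two_le_domNum_zmod_two_prod hε hε2
  have htot : totDomNum (ZMod 2 × S) = 2 := le_antisymm hle (hge.trans domNum_le_totDomNum)
  have hdom : domNum (ZMod 2 × S) = 2 := le_antisymm (domNum_le_totDomNum.trans hle) hge
  exact ⟨lift_eq_ofNat_iff.1 (by rw [e.lift_totDomNum_eq, htot, lift_ofNat]),
    lift_eq_ofNat_iff.1 (by rw [e.lift_domNum_eq, hdom, lift_ofNat])⟩

section QuotientSpanSq

variable {A : Type*} [CommRing A] {π : A}

theorem mk_mul_self_eq_zero_quotient_span_sq :
    Ideal.Quotient.mk (Ideal.span {π ^ 2}) π * Ideal.Quotient.mk (Ideal.span {π ^ 2}) π = 0 := by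
  rw [← map_mul, ← sq, Ideal.Quotient.eq_zero_iff_mem]
  exact Ideal.subset_span rfl

variable [IsDomain A]

theorem Prime.mk_ne_zero_quotient_span_sq (hπ : Prime π) :
    Ideal.Quotient.mk (Ideal.span {π ^ 2}) π ≠ 0 := by
  rw [Ne, Ideal.Quotient.eq_zero_iff_mem, Ideal.mem_span_singleton]
  simpa using (pow_dvd_pow_iff hπ.ne_zero hπ.not_isUnit (n := 2) (m := 1)).not.2 (by norm_num)

theorem Prime.mk_mul_eq_zero_of_mem_zdSet_quotient_span_sq (hπ : Prime π) :
    ∀ s ∈ zdSet (A ⧸ Ideal.span {π ^ 2}), Ideal.Quotient.mk (Ideal.span {π ^ 2}) π * s = 0 := by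
  rintro s ⟨y, hy, hsy⟩
  obtain ⟨a, rfl⟩ := Ideal.Quotient.mk_surjective s
  obtain ⟨b, rfl⟩ := Ideal.Quotient.mk_surjective y
  simp only [← map_mul, ne_eq, Ideal.Quotient.eq_zero_iff_mem, Ideal.mem_span_singleton]
    at hy hsy ⊢
  by_contra hπ2a
  have hπa : ¬π ∣ a := fun h => hπ2a (by rw [sq]; exact mul_dvd_mul_left π h)
  exact hy (hπ.pow_dvd_of_dvd_mul_left 2 hπa hsy)

end QuotientSpanSq

theorem stmt_12 (R : Type*) [CommRing R]
    (h : Nonempty (R ≃+* ZMod 2 × ZMod 4) ∨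
      Nonempty (R ≃+* ZMod 2 ×
        (Polynomial (ZMod 2) ⧸ Ideal.span {(Polynomial.X : Polynomial (ZMod 2)) ^ 2}))) :
    totDomNum R = 2 ∧ domNum R = 2 := by
  rcases h with ⟨⟨e⟩⟩ | ⟨⟨e⟩⟩
  · have hann : ∀ s y : ZMod 4, y ≠ 0 → s * y = 0 → 2 * s = 0 := by decide
    exact totDomNum_eq_two_and_domNum_eq_two_of_ringEquiv (ε := 2) (by decide) (by decide)
      (fun s ⟨y, hy, hsy⟩ => hann s y hy hsy) e
  · have hX := Polynomial.prime_X (R := ZMod 2)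
    exact totDomNum_eq_two_and_domNum_eq_two_of_ringEquiv hX.mk_ne_zero_quotient_span_sq
      mk_mul_self_eq_zero_quotient_span_sq hX.mk_mul_eq_zero_of_mem_zdSet_quotient_span_sq e
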